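/- Let G be a Gauss diagram on n strings and let G' be obtained from G by deleting a pair of arrows with opposite signs joining the same two strings in the same direction, whose two tails are adjacent on one string and whose two heads are adjacent on the other string, the arrow whose tail comes first being the one whose head comes second (a second Reidemeister move Ω2). Then Z_{I,j}(G') = Z_{I,j}(G) for every I ⊆ {1,…,n} and every j ∉ I. Indeed, the two arrows cannot both lie in the image of an embedded tree diagram (their tails are on one string), and the embeddings using exactly one of them cancel in pairs because the two arrows have opposite signs. -/
import Mathlib


/-!
Combinatorial Gauss diagrams on `n` strings and the tree invariants `Z I j`.

A Gauss diagram is encoded by a finite set of arrows; each arrow records the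
string (an element of `Fin n`) and the position (a rational number, increasing
in the direction of the orientation of the string) of its tail and of its head,
together with a sign `±1`.  Only the induced combinatorial data (linear order of
the endpoints along each string, the tail/head pairing and the signs) is ever
used by the definitions below.

The tree invariant `Z I j G = ∑_{A ∈ 𝒜_{I,j}} sign(A) ⟨A, G⟩` is computed as a
signed count over all subsets `S` of the arrows of `G` that form a planar tree
diagram with leaves on `I` and trunk on `j`: each pair `(A, φ)` of a planar tree
diagram `A ∈ 𝒜_{I,j}` together with an embedding `φ : A → G` corresponds
bijectively to the subset `S = Im φ` of the arrows of `G`, which is itself a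
planar tree diagram with leaves on `I` and trunk on `j`; the contribution of the
pair to the sum is `sign(A) · sign(φ) = (-1)^{#right-pointing arrows of S} · ∏_{a ∈ S} sign(a)`.
-/

open scoped Classical

/-- An arrow of a Gauss diagram on `n` strings: a tail endpoint, a head
endpoint (each given by the string it lies on and its position along that
string) and a sign. -/
structure GArrow (n : ℕ) where
  tailStr : Fin n
  tailPos : ℚ
  headStr : Fin n
  headPos : ℚ
  sign : ℤ
deriving DecidableEq

namespace GArrow

/-- The two endpoints of an arrow: `false` is the tail, `true` is the head. -/
def ep {n : ℕ} (a : GArrow n) : Bool → Fin n × ℚ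
  | false => (a.tailStr, a.tailPos)
  | true => (a.headStr, a.headPos)

end GArrow

/-- A Gauss diagram on `n` strings: a finite set of signed arrows with all
endpoints pairwise distinct, and all signs equal to `±1`. -/
structure GaussDiagram (n : ℕ) where
  arrows : Finset (GArrow n)
  sign_pm : ∀ a ∈ arrows, a.sign = 1 ∨ a.sign = -1
  endpoints_distinct : ∀ a ∈ arrows, ∀ b ∈ arrows, ∀ s t : Bool,
    a.ep s = b.ep t → a = b ∧ s = t

/-- `S` is a tree diagram with leaves on `I` and trunk on `j`:
* the head and the tail of every arrow lie on different strings;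
* for each `i ∈ I` there is exactly one arrow tail on string `i`, and there are
  no arrow tails on strings outside `I`;
* every arrow head lies on a string of `I ∪ {j}`;
* on each string `i ∈ I` all arrow heads precede the unique arrow tail. -/
def IsTreeDiagram {n : ℕ} (I : Finset (Fin n)) (j : Fin n)
    (S : Finset (GArrow n)) : Prop :=
  (∀ a ∈ S, a.tailStr ≠ a.headStr) ∧
  (∀ i ∈ I, ∃! a, a ∈ S ∧ a.tailStr = i) ∧
  (∀ a ∈ S, a.tailStr ∈ I) ∧
  (∀ a ∈ S, a.headStr ∈ I ∨ a.headStr = j) ∧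
  (∀ a ∈ S, ∀ b ∈ S, a.headStr = b.tailStr → a.headPos < b.tailPos)

/-- `ParentRel S s t` : string `s` is the parent of string `t` in the rooted
tree determined by the tree diagram `S`, i.e. the (unique) arrow with tail on
`t` has its head on `s`. -/
def ParentRel {n : ℕ} (S : Finset (GArrow n)) (s t : Fin n) : Prop :=
  ∃ a ∈ S, a.tailStr = t ∧ a.headStr = s

/-- `Descends S s k` : string `k` belongs to the subtree of string `s` (it is
`s` itself or an iterated child of `s`). -/
def Descends {n : ℕ} (S : Finset (GArrow n)) : Fin n → Fin n → Prop :=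
  Relation.ReflTransGen (ParentRel S)

/-- `S` is a *planar* tree diagram with leaves on `I` and trunk on `j`: the
rooted tree `T_S` determined by `S` can be drawn in the plane so that the
clockwise order of its leaves, starting from the root on string `j`, is the
order of the string numbers.  Combinatorially this says that:
* the parent relation makes the strings carrying the arrows into a tree rooted
  at `j` (every leaf string is an iterated child of `j`);
* the whole subtree hanging from an arrow lies on the same side of the string
  carrying the head of that arrow as its tail does;
* two subtrees hanging on the same side of a common string are ordered, along
  that string, compatibly with the order of the strings: for two arrow heads on
  the same string, with both tails on the left, the subtree attached closer to
  the beginning of the string is the one carrying the larger string numbers,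
  while for two tails on the right it is the one carrying the smaller string
  numbers. -/
def IsPlanarTreeDiagram {n : ℕ} (I : Finset (Fin n)) (j : Fin n)
    (S : Finset (GArrow n)) : Prop :=
  IsTreeDiagram I j S ∧
  (∀ i ∈ I, Relation.TransGen (ParentRel S) j i) ∧
  (∀ a ∈ S, ∀ k : Fin n, Descends S a.tailStr k →
    (a.tailStr < a.headStr ↔ k < a.headStr)) ∧
  (∀ a ∈ S, ∀ b ∈ S, a.headStr = b.headStr → a.headPos < b.headPos →
    ∀ k k' : Fin n, Descends S a.tailStr k → Descends S b.tailStr k' →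
      ((a.tailStr < a.headStr → b.tailStr < b.headStr → k' < k) ∧
       (a.headStr < a.tailStr → b.headStr < b.tailStr → k < k')))

/-- The sign `(-1)^q` of an (embedded) arrow diagram, where `q` is the number
of right-pointing arrows (tail on a string of smaller number than the head). -/
noncomputable def treeSign {n : ℕ} (S : Finset (GArrow n)) : ℤ :=
  (-1) ^ (S.filter fun a => a.tailStr < a.headStr).card

/-- The tree invariant `Z_{I,j}(G) = ∑_{A ∈ 𝒜_{I,j}} sign(A)·⟨A,G⟩`, computed
as the signed count of embedded planar tree diagrams with leaves on `I` and
trunk on `j` inside `G`.  In particular `Z ∅ j G = 1` (only `S = ∅`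
contributes). -/
noncomputable def Z {n : ℕ} (I : Finset (Fin n)) (j : Fin n)
    (G : GaussDiagram n) : ℤ :=
  ∑ S ∈ G.arrows.powerset,
    if IsPlanarTreeDiagram I j S then treeSign S * ∏ a ∈ S, a.sign else 0

/-- The two points at positions `p` and `q` on string `str` are adjacent in the
Gauss diagram `G`: no arrow endpoint of `G` lies strictly between them. -/
def IsAdjacentPair {n : ℕ} (G : GaussDiagram n) (str : Fin n) (p q : ℚ) : Prop :=
  p ≠ q ∧ ∀ c ∈ G.arrows, ∀ s : Bool, (c.ep s).1 = str →
    ¬(min p q < (c.ep s).2 ∧ (c.ep s).2 < max p q)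

section Aux

lemma adj_aux {x y p : ℚ} (h : ¬(min x y < p ∧ p < max x y)) (h1 : p ≠ x) (h2 : p ≠ y) :
    (x < p ↔ y < p) ∧ (p < x ↔ p < y) := by
  have hm : p < min x y ∨ max x y < p := by
    by_contra hc
    push_neg at hc
    obtain ⟨hc1, hc2⟩ := hc
    have h3 : min x y < p := by
      refine lt_of_le_of_ne hc1 ?_
      rcases min_choice x y with h' | h' <;> rw [h'] <;> [exact h1.symm; exact h2.symm]
    have h4 : p < max x y := by
      refine lt_of_le_of_ne hc2 ?_
      rcases max_choice x y with h' | h' <;> rw [h'] <;> [exact h1; exact h2]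
    exact h ⟨h3, h4⟩
  rcases hm with hm | hm
  · have := min_le_left x y; have := min_le_right x y
    constructor <;> constructor <;> intro <;> linarith
  · have := le_max_left x y; have := le_max_right x y
    constructor <;> constructor <;> intro <;> linarith

lemma ep_ne {n : ℕ} (G : GaussDiagram n) {c d : GArrow n} (hc : c ∈ G.arrows)
    (hd : d ∈ G.arrows) (hcd : c ≠ d) (s t : Bool)
    (hstr : (c.ep s).1 = (d.ep t).1) : (c.ep s).2 ≠ (d.ep t).2 := by
  intro h
  exact hcd (G.endpoints_distinct c hc d hd s t (Prod.ext hstr h)).1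

lemma adj_symm {n : ℕ} {G : GaussDiagram n} {str : Fin n} {p q : ℚ}
    (h : IsAdjacentPair G str p q) : IsAdjacentPair G str q p :=
  ⟨h.1.symm, fun c hc s hs => by rw [min_comm, max_comm]; exact h.2 c hc s hs⟩

lemma parentRel_swap {n : ℕ} {S : Finset (GArrow n)} {a b : GArrow n} (haS : a ∈ S)
    (hts : a.tailStr = b.tailStr) (hhs : a.headStr = b.headStr) :
    ParentRel (insert b (S.erase a)) = ParentRel S := by
  funext s t
  apply propext
  constructor
  · rintro ⟨c, hc, h1, h2⟩
    rcases Finset.mem_insert.1 hc with rfl | hc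
    · exact ⟨a, haS, hts.trans h1, hhs.trans h2⟩
    · exact ⟨c, Finset.mem_of_mem_erase hc, h1, h2⟩
  · rintro ⟨c, hc, h1, h2⟩
    by_cases hca : c = a
    · subst hca
      exact ⟨b, Finset.mem_insert_self _ _, hts.symm.trans h1, hhs.symm.trans h2⟩
    · exact ⟨c, Finset.mem_insert_of_mem (Finset.mem_erase.2 ⟨hca, hc⟩), h1, h2⟩

lemma not_planar_both {n : ℕ} {I : Finset (Fin n)} {j : Fin n} {S : Finset (GArrow n)}
    {a b : GArrow n} (haS : a ∈ S) (hbS : b ∈ S) (hab : a ≠ b)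
    (hts : a.tailStr = b.tailStr) : ¬ IsPlanarTreeDiagram I j S := by
  rintro ⟨⟨h1, h2, h3, h4, h5⟩, -⟩
  obtain ⟨c, -, hcu⟩ := h2 a.tailStr (h3 a haS)
  exact hab ((hcu a ⟨haS, rfl⟩).trans (hcu b ⟨hbS, hts.symm⟩).symm)

lemma swap_planar {n : ℕ} (G : GaussDiagram n) (a b : GArrow n)
    (ha : a ∈ G.arrows) (hb : b ∈ G.arrows) (hab : a ≠ b)
    (hts : a.tailStr = b.tailStr) (hhs : a.headStr = b.headStr)
    (hadjt : IsAdjacentPair G a.tailStr a.tailPos b.tailPos)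
    (hadjh : IsAdjacentPair G a.headStr a.headPos b.headPos)
    (I : Finset (Fin n)) (j : Fin n) (S : Finset (GArrow n))
    (hS : S ⊆ G.arrows) (haS : a ∈ S) (hbS : b ∉ S)
    (hpl : IsPlanarTreeDiagram I j S) :
    IsPlanarTreeDiagram I j (insert b (S.erase a)) := by
  obtain ⟨⟨h1, h2, h3, h4, h5⟩, hP1, hP2, hP3⟩ := hpl
  have hPR : ParentRel (insert b (S.erase a)) = ParentRel S := parentRel_swap haS hts hhs
  have hD : Descends (insert b (S.erase a)) = Descends S := by
    unfold Descends; rw [hPR]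
  have hmem : ∀ x, x ∈ insert b (S.erase a) ↔ x = b ∨ (x ∈ S ∧ x ≠ a) := by
    intro x
    simp only [Finset.mem_insert, Finset.mem_erase]
    tauto
  have htail : ∀ c ∈ G.arrows, c ≠ a → c ≠ b → ∀ s : Bool, (c.ep s).1 = a.tailStr →
      ((a.tailPos < (c.ep s).2 ↔ b.tailPos < (c.ep s).2) ∧
       ((c.ep s).2 < a.tailPos ↔ (c.ep s).2 < b.tailPos)) := by
    intro c hc hca hcb s hstr
    have hn1 : (c.ep s).2 ≠ a.tailPos := ep_ne G hc ha hca s false hstr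
    have hn2 : (c.ep s).2 ≠ b.tailPos := ep_ne G hc hb hcb s false (hstr.trans hts)
    exact adj_aux (hadjt.2 c hc s hstr) hn1 hn2
  have hhead : ∀ c ∈ G.arrows, c ≠ a → c ≠ b → ∀ s : Bool, (c.ep s).1 = a.headStr →
      ((a.headPos < (c.ep s).2 ↔ b.headPos < (c.ep s).2) ∧
       ((c.ep s).2 < a.headPos ↔ (c.ep s).2 < b.headPos)) := by
    intro c hc hca hcb s hstr
    have hn1 : (c.ep s).2 ≠ a.headPos := ep_ne G hc ha hca s true hstr
    have hn2 : (c.ep s).2 ≠ b.headPos := ep_ne G hc hb hcb s true (hstr.trans hhs)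
    exact adj_aux (hadjh.2 c hc s hstr) hn1 hn2
  refine ⟨⟨?_, ?_, ?_, ?_, ?_⟩, ?_, ?_, ?_⟩
  · intro x hx
    rcases (hmem x).1 hx with heq | ⟨hxS, -⟩
    · rw [heq, ← hts, ← hhs]; exact h1 a haS
    · exact h1 x hxS
  · intro i hi
    obtain ⟨c, ⟨hcS, hct⟩, hcu⟩ := h2 i hi
    by_cases hca : c = a
    · subst hca
      refine ⟨b, ⟨(hmem b).2 (Or.inl rfl), hts ▸ hct⟩, ?_⟩
      rintro x ⟨hx, hxt⟩
      rcases (hmem x).1 hx with heq | ⟨hxS, hxa⟩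
      · exact heq
      · exact absurd (hcu x ⟨hxS, hxt⟩) hxa
    · refine ⟨c, ⟨(hmem c).2 (Or.inr ⟨hcS, hca⟩), hct⟩, ?_⟩
      rintro x ⟨hx, hxt⟩
      rcases (hmem x).1 hx with heq | ⟨hxS, hxa⟩
      · rw [heq] at hxt
        exact absurd (hcu a ⟨haS, hts.trans hxt⟩).symm hca
      · exact hcu x ⟨hxS, hxt⟩
  · intro x hx
    rcases (hmem x).1 hx with heq | ⟨hxS, -⟩
    · rw [heq, ← hts]; exact h3 a haS
    · exact h3 x hxS
  · intro x hx
    rcases (hmem x).1 hx with heq | ⟨hxS, -⟩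
    · rw [heq, ← hhs]; exact h4 a haS
    · exact h4 x hxS
  · intro c hc d hd hcd
    rcases (hmem c).1 hc with heqc | ⟨hcS, hca⟩ <;>
      rcases (hmem d).1 hd with heqd | ⟨hdS, hda⟩
    · rw [heqc, heqd] at hcd
      exact absurd ((hhs.trans hcd).trans hts.symm).symm (h1 a haS)
    · rw [heqc] at hcd ⊢
      have hdb : d ≠ b := fun h => hbS (h ▸ hdS)
      have h5' := h5 a haS d hdS (hhs.trans hcd)
      exact (hhead d (hS hdS) hda hdb false ((hhs.trans hcd).symm) |>.1).mp h5'
    · rw [heqd] at hcd ⊢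
      have hcb : c ≠ b := fun h => hbS (h ▸ hcS)
      have h5' := h5 c hcS a haS (hcd.trans hts.symm)
      exact (htail c (hS hcS) hca hcb true (hcd.trans hts.symm) |>.2).mp h5'
    · exact h5 c hcS d hdS hcd
  · intro i hi; rw [hPR]; exact hP1 i hi
  · intro c hc k
    rcases (hmem c).1 hc with heq | ⟨hcS, -⟩
    · rw [heq, hD, ← hts, ← hhs]; exact hP2 a haS k
    · rw [hD]; exact hP2 c hcS k
  · intro c hc d hd hcd hpos k k' hk hk'
    rw [hD] at hk hk'
    rcases (hmem c).1 hc with heqc | ⟨hcS, hca⟩ <;>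
      rcases (hmem d).1 hd with heqd | ⟨hdS, hda⟩
    · rw [heqc, heqd] at hpos
      exact absurd hpos (lt_irrefl _)
    · rw [heqc] at hcd hpos hk ⊢
      have hdb : d ≠ b := fun h => hbS (h ▸ hdS)
      rw [← hts] at hk
      have hpos' : a.headPos < d.headPos :=
        (hhead d (hS hdS) hda hdb true ((hhs.trans hcd).symm) |>.1).mpr hpos
      have := hP3 a haS d hdS (hhs.trans hcd) hpos' k k' hk hk'
      rw [← hts, ← hhs]; exact this
    · rw [heqd] at hcd hpos hk' ⊢
      have hcb : c ≠ b := fun h => hbS (h ▸ hcS)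
      rw [← hts] at hk'
      have hpos' : c.headPos < a.headPos :=
        (hhead c (hS hcS) hca hcb true (hcd.trans hhs.symm) |>.2).mpr hpos
      have := hP3 c hcS a haS (hcd.trans hhs.symm) hpos' k k' hk hk'
      rw [← hts, ← hhs]; exact this
    · exact hP3 c hcS d hdS hcd hpos k k' hk hk'

end Aux

section Main

lemma swap_treeSign {n : ℕ} {S : Finset (GArrow n)} {a b : GArrow n}
    (haS : a ∈ S) (hbS : b ∉ S)
    (hts : a.tailStr = b.tailStr) (hhs : a.headStr = b.headStr) :
    treeSign (insert b (S.erase a)) = treeSign S := by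
  unfold treeSign
  congr 1
  have hb1 : b ∉ S.erase a := fun h => hbS (Finset.mem_of_mem_erase h)
  have ha1 : a ∉ S.erase a := Finset.notMem_erase a S
  conv_rhs => rw [← Finset.insert_erase haS]
  rw [Finset.filter_insert, Finset.filter_insert]
  by_cases hpa : a.tailStr < a.headStr
  · have hpb : b.tailStr < b.headStr := by rw [← hts, ← hhs]; exact hpa
    rw [if_pos hpb, if_pos hpa,
      Finset.card_insert_of_notMem (fun h => hb1 (Finset.mem_of_mem_filter _ h)),
      Finset.card_insert_of_notMem (fun h => ha1 (Finset.mem_of_mem_filter _ h))]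
  · have hpb : ¬ b.tailStr < b.headStr := by rw [← hts, ← hhs]; exact hpa
    rw [if_neg hpb, if_neg hpa]

lemma swap_prod {n : ℕ} {S : Finset (GArrow n)} {a b : GArrow n}
    (haS : a ∈ S) (hbS : b ∉ S) (hsign : a.sign = -b.sign) :
    ∏ x ∈ insert b (S.erase a), x.sign = - ∏ x ∈ S, x.sign := by
  have hb1 : b ∉ S.erase a := fun h => hbS (Finset.mem_of_mem_erase h)
  rw [Finset.prod_insert hb1]
  conv_rhs => rw [← Finset.insert_erase haS, Finset.prod_insert (Finset.notMem_erase a S)]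
  have : b.sign = -a.sign := by rw [hsign]; ring
  rw [this]; ring

/-- **Invariance under the second Reidemeister move.**  If `G'` is obtained
from `G` by deleting a pair of arrows of opposite signs joining the same two
strings in the same direction, whose two tails are adjacent on one string and
whose two heads are adjacent on the other string, the arrow whose tail comes
first being the one whose head comes second, then `Z_{I,j}(G') = Z_{I,j}(G)`
for every `I ⊆ {1,…,n}` and every `j ∉ I`. -/
theorem omega2_invariance {n : ℕ} (G G' : GaussDiagram n) (a b : GArrow n)
    (ha : a ∈ G.arrows) (hb : b ∈ G.arrows) (hab : a ≠ b)
    (hts : a.tailStr = b.tailStr) (hhs : a.headStr = b.headStr)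
    (hsign : a.sign = -b.sign)
    (hadjt : IsAdjacentPair G a.tailStr a.tailPos b.tailPos)
    (hadjh : IsAdjacentPair G a.headStr a.headPos b.headPos)
    (horder : (a.tailPos < b.tailPos ∧ b.headPos < a.headPos) ∨
      (b.tailPos < a.tailPos ∧ a.headPos < b.headPos))
    (hG' : G'.arrows = (G.arrows.erase a).erase b) :
    ∀ (I : Finset (Fin n)) (j : Fin n), j ∉ I → Z I j G' = Z I j G := by
  intro I j _
  set f : Finset (GArrow n) → ℤ :=
    fun S => if IsPlanarTreeDiagram I j S then treeSign S * ∏ x ∈ S, x.sign else 0 with hf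
  set P := G.arrows.powerset with hP
  -- the swapped-b version of the adjacency hypotheses
  have hadjt' : IsAdjacentPair G b.tailStr b.tailPos a.tailPos := adj_symm (hts ▸ hadjt)
  have hadjh' : IsAdjacentPair G b.headStr b.headPos a.headPos := adj_symm (hhs ▸ hadjh)
  -- the key negation
  have hneg : ∀ S, S ⊆ G.arrows → a ∈ S → b ∉ S → f (insert b (S.erase a)) = - f S := by
    intro S hSG haS hbS
    have hiff : IsPlanarTreeDiagram I j (insert b (S.erase a)) ↔ IsPlanarTreeDiagram I j S := by
      constructor
      · intro h
        have hsub : insert b (S.erase a) ⊆ G.arrows := by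
          intro x hx
          rcases Finset.mem_insert.1 hx with rfl | hx
          · exact hb
          · exact hSG (Finset.mem_of_mem_erase hx)
        have := swap_planar G b a hb ha hab.symm hts.symm hhs.symm hadjt' hadjh'
          I j (insert b (S.erase a)) hsub (Finset.mem_insert_self _ _)
          (by
            intro hcon
            rcases Finset.mem_insert.1 hcon with h' | h'
            · exact hab h'
            · exact (Finset.notMem_erase a S) h') h
        rwa [Finset.erase_insert (fun h => hbS (Finset.mem_of_mem_erase h)),
          Finset.insert_erase haS] at this
      · exact swap_planar G a b ha hb hab hts hhs hadjt hadjh I j S hSG haS hbS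
    by_cases hp : IsPlanarTreeDiagram I j S
    · rw [hf]
      simp only [if_pos hp, if_pos (hiff.2 hp)]
      rw [swap_treeSign haS hbS hts hhs, swap_prod haS hbS hsign]
      ring
    · rw [hf]
      simp only [if_neg hp, if_neg (fun h => hp (hiff.1 h))]
      ring
  -- split the sum
  have e1 : ∑ S ∈ P, f S
      = (∑ S ∈ P.filter (fun S => a ∈ S), f S) + ∑ S ∈ P.filter (fun S => a ∉ S), f S :=
    (Finset.sum_filter_add_sum_filter_not P _ f).symm
  have e2 : ∑ S ∈ P.filter (fun S => a ∈ S), f S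
      = (∑ S ∈ P.filter (fun S => a ∈ S ∧ b ∈ S), f S)
        + ∑ S ∈ P.filter (fun S => a ∈ S ∧ b ∉ S), f S := by
    rw [← Finset.sum_filter_add_sum_filter_not (P.filter (fun S => a ∈ S)) (fun S => b ∈ S) f,
      Finset.filter_filter, Finset.filter_filter]
  have e3 : ∑ S ∈ P.filter (fun S => a ∉ S), f S
      = (∑ S ∈ P.filter (fun S => a ∉ S ∧ b ∈ S), f S)
        + ∑ S ∈ P.filter (fun S => a ∉ S ∧ b ∉ S), f S := by
    rw [← Finset.sum_filter_add_sum_filter_not (P.filter (fun S => a ∉ S)) (fun S => b ∈ S) f,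
      Finset.filter_filter, Finset.filter_filter]
  have h11 : ∑ S ∈ P.filter (fun S => a ∈ S ∧ b ∈ S), f S = 0 := by
    refine Finset.sum_eq_zero (fun S hS => ?_)
    simp only [Finset.mem_filter] at hS
    rw [hf]
    exact if_neg (not_planar_both hS.2.1 hS.2.2 hab hts)
  have h00 : P.filter (fun S => a ∉ S ∧ b ∉ S) = ((G.arrows.erase a).erase b).powerset := by
    ext S
    simp only [Finset.mem_filter, hP, Finset.mem_powerset, Finset.subset_erase]
    tauto
  have hbij : ∑ S ∈ P.filter (fun S => a ∉ S ∧ b ∈ S), f S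
      = ∑ S ∈ P.filter (fun S => a ∈ S ∧ b ∉ S), f (insert b (S.erase a)) := by
    refine Finset.sum_nbij' (fun S => insert a (S.erase b)) (fun S => insert b (S.erase a))
      ?_ ?_ ?_ ?_ ?_
    · intro S hS
      simp only [Finset.mem_filter, hP, Finset.mem_powerset] at hS ⊢
      obtain ⟨hSG, haS, hbS⟩ := hS
      refine ⟨?_, Finset.mem_insert_self _ _, ?_⟩
      · intro x hx
        rcases Finset.mem_insert.1 hx with rfl | hx
        · exact ha
        · exact hSG (Finset.mem_of_mem_erase hx)
      · intro hcon
        rcases Finset.mem_insert.1 hcon with h' | h'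
        · exact hab h'.symm
        · exact (Finset.notMem_erase b S) h'
    · intro S hS
      simp only [Finset.mem_filter, hP, Finset.mem_powerset] at hS ⊢
      obtain ⟨hSG, haS, hbS⟩ := hS
      refine ⟨?_, ?_, Finset.mem_insert_self _ _⟩
      · intro x hx
        rcases Finset.mem_insert.1 hx with rfl | hx
        · exact hb
        · exact hSG (Finset.mem_of_mem_erase hx)
      · intro hcon
        rcases Finset.mem_insert.1 hcon with h' | h'
        · exact hab h'
        · exact (Finset.notMem_erase a S) h'
    · intro S hS
      simp only [Finset.mem_filter, hP, Finset.mem_powerset] at hS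
      obtain ⟨hSG, haS, hbS⟩ := hS
      show insert b ((insert a (S.erase b)).erase a) = S
      rw [Finset.erase_insert (fun h => haS (Finset.mem_of_mem_erase h)),
        Finset.insert_erase hbS]
    · intro S hS
      simp only [Finset.mem_filter, hP, Finset.mem_powerset] at hS
      obtain ⟨hSG, haS, hbS⟩ := hS
      show insert a ((insert b (S.erase a)).erase b) = S
      rw [Finset.erase_insert (fun h => hbS (Finset.mem_of_mem_erase h)),
        Finset.insert_erase haS]
    · intro S hS
      simp only [Finset.mem_filter, hP, Finset.mem_powerset] at hS
      obtain ⟨hSG, haS, hbS⟩ := hS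
      show f S = f (insert b ((insert a (S.erase b)).erase a))
      rw [Finset.erase_insert (fun h => haS (Finset.mem_of_mem_erase h)),
        Finset.insert_erase hbS]
  have hcancel : (∑ S ∈ P.filter (fun S => a ∈ S ∧ b ∉ S), f S)
      + ∑ S ∈ P.filter (fun S => a ∉ S ∧ b ∈ S), f S = 0 := by
    rw [hbij, ← Finset.sum_add_distrib]
    refine Finset.sum_eq_zero (fun S hS => ?_)
    simp only [Finset.mem_filter, hP, Finset.mem_powerset] at hS
    rw [hneg S hS.1 hS.2.1 hS.2.2]
    ring
  have : Z I j G = ∑ S ∈ P, f S := rfl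
  rw [this, e1, e2, e3, h11]
  have : Z I j G' = ∑ S ∈ P.filter (fun S => a ∉ S ∧ b ∉ S), f S := by
    rw [h00]
    unfold Z
    rw [hG']
  rw [this]
  linarith [hcancel]
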